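/- arXiv:math/0407472 — 9 statements merged into one kernel-verified Lean document; each statement's English description precedes it below -/
import Mathlib

section
/- The group SL(2,ℂ) acts transitively on the set of real hyperplanes through the origin of ℂ²: for any two ℝ-linear subspaces H₁, H₂ ⊆ ℂ² with dim_ℝ H₁ = dim_ℝ H₂ = 3, there exists a matrix A ∈ SL(2,ℂ) such that the image of H₁ under the ℂ-linear map of ℂ² determined by A is exactly H₂. -/
open Matrix

/-- Any linear functional on `Fin 2 → ℂ` is determined by its values on the basis. -/
private lemma fun_apply_eq_sum (f : (Fin 2 → ℂ) →ₗ[ℂ] ℂ) (v : Fin 2 → ℂ) :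
    f v = ∑ i, v i * f (Pi.single i 1) := by
  conv_lhs => rw [show v = ∑ i, Pi.single i (v i) from (Finset.univ_sum_single v).symm]
  rw [map_sum]
  refine Finset.sum_congr rfl fun i _ => ?_
  have h : Pi.single i (v i) = v i • (Pi.single i 1 : Fin 2 → ℂ) := by
    ext j
    by_cases hji : j = i <;> simp [Pi.single_apply, hji]
  rw [h, _root_.map_smul, smul_eq_mul]

/-- SL(2,ℂ) maps the first basis vector to any nonzero vector. -/
private lemma exists_SL2_mulVec_single (v : Fin 2 → ℂ) (hv : v ≠ 0) :
    ∃ A : Matrix.SpecialLinearGroup (Fin 2) ℂ,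
      (A : Matrix (Fin 2) (Fin 2) ℂ).mulVec (Pi.single 0 1) = v := by
  by_cases h0 : v 0 = 0
  · have h1 : v 1 ≠ 0 := by
      intro h1
      apply hv
      funext i; fin_cases i <;> simp [h0, h1]
    refine ⟨⟨!![0, -(v 1)⁻¹; v 1, 0], by simp [Matrix.det_fin_two_of, h1]⟩, ?_⟩
    funext i
    fin_cases i <;>
      simp [Matrix.mulVec, dotProduct, Fin.sum_univ_two, Pi.single_apply, h0]
  · refine ⟨⟨!![v 0, 0; v 1, (v 0)⁻¹], by simp [Matrix.det_fin_two_of, h0]⟩, ?_⟩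
    funext i
    fin_cases i <;>
      simp [Matrix.mulVec, dotProduct, Fin.sum_univ_two, Pi.single_apply]

/-- SL(2,ℂ) acts transitively on nonzero vectors. -/
private lemma exists_SL2_mulVec (v w : Fin 2 → ℂ) (hv : v ≠ 0) (hw : w ≠ 0) :
    ∃ A : Matrix.SpecialLinearGroup (Fin 2) ℂ,
      (A : Matrix (Fin 2) (Fin 2) ℂ).mulVec v = w := by
  obtain ⟨B, hB⟩ := exists_SL2_mulVec_single v hv
  obtain ⟨C, hC⟩ := exists_SL2_mulVec_single w hw
  refine ⟨C * B⁻¹, ?_⟩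
  have h1 : ((B⁻¹ : Matrix.SpecialLinearGroup (Fin 2) ℂ) : Matrix (Fin 2) (Fin 2) ℂ).mulVec v
      = Pi.single 0 1 := by
    rw [← hB, Matrix.mulVec_mulVec, ← Matrix.SpecialLinearGroup.coe_mul, inv_mul_cancel,
      Matrix.SpecialLinearGroup.coe_one, Matrix.one_mulVec]
  rw [Matrix.SpecialLinearGroup.coe_mul, ← Matrix.mulVec_mulVec, h1, hC]

/-- Every real hyperplane of ℂ² is the zero set of the real part of a nonzero ℂ-linear
functional. -/
private lemma exists_functional (H : Submodule ℝ (Fin 2 → ℂ))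
    (h : Module.finrank ℝ H = 3) :
    ∃ f : (Fin 2 → ℂ) →ₗ[ℂ] ℂ, f ≠ 0 ∧ ∀ v, v ∈ H ↔ (f v).re = 0 := by
  have hfr : Module.finrank ℝ (Fin 2 → ℂ) = 4 := by
    rw [Module.finrank_pi_fintype ℝ]
    simp [Complex.finrank_real_complex]
  have hq : Module.finrank ℝ ((Fin 2 → ℂ) ⧸ H) = 1 := by
    have := Submodule.finrank_quotient_add_finrank H
    omega
  have e : ((Fin 2 → ℂ) ⧸ H) ≃ₗ[ℝ] ℝ :=
    LinearEquiv.ofFinrankEq _ _ (by rw [hq, Module.finrank_self])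
  set φ : (Fin 2 → ℂ) →ₗ[ℝ] ℝ := e.toLinearMap ∘ₗ H.mkQ with hφ
  have hker : LinearMap.ker φ = H := by
    rw [hφ, LinearMap.ker_comp, LinearEquiv.ker, Submodule.comap_bot, Submodule.ker_mkQ]
  have hre : ∀ v, ((φ.extendTo𝕜' : (Fin 2 → ℂ) →ₗ[ℂ] ℂ) v).re = φ v := by
    intro v
    have := LinearMap.extendTo𝕜'_apply_re (𝕜 := ℂ) φ v
    rwa [RCLike.re_to_complex] at this
  refine ⟨φ.extendTo𝕜', ?_, ?_⟩
  · intro hf0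
    have hφ0 : ∀ x, φ x = 0 := by
      intro x
      rw [← hre x, hf0]
      simp
    have : H = ⊤ := by
      rw [← hker]
      exact LinearMap.ker_eq_top.mpr (LinearMap.ext hφ0)
    rw [this, finrank_top, hfr] at h
    omega
  · intro v
    rw [hre, ← hker, LinearMap.mem_ker]

/-- SL(2,ℂ) acts transitively on real hyperplanes (3-dimensional ℝ-subspaces) of ℂ². -/
theorem sl2C_transitive_on_real_hyperplanes
    (H₁ H₂ : Submodule ℝ (Fin 2 → ℂ))
    (h₁ : Module.finrank ℝ H₁ = 3) (h₂ : Module.finrank ℝ H₂ = 3) :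
    ∃ A : Matrix.SpecialLinearGroup (Fin 2) ℂ,
      Submodule.map
        ((Matrix.toLin' (A : Matrix (Fin 2) (Fin 2) ℂ)).restrictScalars ℝ) H₁ = H₂ := by
  obtain ⟨f₁, hf₁, hH₁⟩ := exists_functional H₁ h₁
  obtain ⟨f₂, hf₂, hH₂⟩ := exists_functional H₂ h₂
  have hr₁0 : (fun i => f₁ (Pi.single i 1)) ≠ (0 : Fin 2 → ℂ) := by
    intro h0
    apply hf₁
    ext i
    simpa using congrFun h0 i
  have hr₂0 : (fun i => f₂ (Pi.single i 1)) ≠ (0 : Fin 2 → ℂ) := by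
    intro h0
    apply hf₂
    ext i
    simpa using congrFun h0 i
  obtain ⟨B, hB⟩ := exists_SL2_mulVec _ _ hr₂0 hr₁0
  obtain ⟨A, hAc⟩ : ∃ A : Matrix.SpecialLinearGroup (Fin 2) ℂ,
      (A : Matrix (Fin 2) (Fin 2) ℂ) = (B : Matrix (Fin 2) (Fin 2) ℂ)ᵀ :=
    ⟨⟨(B : Matrix (Fin 2) (Fin 2) ℂ)ᵀ, by rw [Matrix.det_transpose]; exact B.2⟩, rfl⟩
  have key : ∀ v : Fin 2 → ℂ, f₂ ((A : Matrix (Fin 2) (Fin 2) ℂ).mulVec v) = f₁ v := by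
    intro v
    rw [fun_apply_eq_sum f₂, fun_apply_eq_sum f₁, Fin.sum_univ_two, Fin.sum_univ_two,
      ← congrFun hB 0, ← congrFun hB 1]
    simp only [hAc, Matrix.mulVec, dotProduct, Fin.sum_univ_two, Matrix.transpose_apply]
    ring
  refine ⟨A, ?_⟩
  ext w
  simp only [Submodule.mem_map, LinearMap.restrictScalars_apply, Matrix.toLin'_apply]
  constructor
  · rintro ⟨v, hv, rfl⟩
    rw [hH₂, key]
    exact (hH₁ v).mp hv
  · intro hw
    refine ⟨((A⁻¹ : Matrix.SpecialLinearGroup (Fin 2) ℂ) : Matrix (Fin 2) (Fin 2) ℂ).mulVec w,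
      ?_, ?_⟩
    · rw [hH₁, ← key, Matrix.mulVec_mulVec, ← Matrix.SpecialLinearGroup.coe_mul,
        mul_inv_cancel, Matrix.SpecialLinearGroup.coe_one, Matrix.one_mulVec]
      exact (hH₂ w).mp hw
    · rw [Matrix.mulVec_mulVec, ← Matrix.SpecialLinearGroup.coe_mul,
        mul_inv_cancel, Matrix.SpecialLinearGroup.coe_one, Matrix.one_mulVec]
end

section
/- SO(3) acts freely on the open set {z ∈ ℂ³ : ‖z‖² > |z·z|}: if g ∈ SO(3) and z ∈ ℂ³ satisfy ‖z‖² > |z·z| and g·z = z, then g is the identity matrix. -/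
/-!
Write `z = x + i y` with `x, y ∈ ℝ³`. Since `g` is real, `g z = z` means `g x = x` and `g y = y`,
and a rotation also fixes `x ⨯₃ y`. The hypothesis `|z·z| < ‖z‖²` is equivalent to the strict
Cauchy–Schwarz inequality `(x·y)² < |x|²|y|²`, i.e. to `x ⨯₃ y ≠ 0` by Lagrange's identity, so
`x ⨯₃ y, x, y` is a basis of `ℝ³` fixed by `g`.
-/

open Matrix Complex

theorem Matrix.mulVec_cross_mulVec {R : Type*} [CommRing R] (A : Matrix (Fin 3) (Fin 3) R)
    (u v : Fin 3 → R) : (A *ᵥ u) ⨯₃ (A *ᵥ v) = (adjugate A)ᵀ *ᵥ (u ⨯₃ v) := by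
  ext i
  fin_cases i <;>
    simp [adjugate_fin_three, cross_apply, mulVec, dotProduct, Fin.sum_univ_three] <;> ring

theorem Matrix.adjugate_eq_transpose_of_mul_transpose_eq_one {n R : Type*} [Fintype n]
    [DecidableEq n] [CommRing R] {A : Matrix n n R} (horth : A * Aᵀ = 1) (hdet : A.det = 1) :
    adjugate A = Aᵀ := by
  have hA : A * adjugate A = 1 := by rw [mul_adjugate, hdet, one_smul]
  calc adjugate A = Aᵀ * A * adjugate A := by rw [mul_eq_one_comm.mp horth, one_mul]
    _ = Aᵀ := by rw [mul_assoc, hA, mul_one]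

theorem Matrix.mulVec_cross_of_mul_transpose_eq_one {R : Type*} [CommRing R]
    {A : Matrix (Fin 3) (Fin 3) R} (horth : A * Aᵀ = 1) (hdet : A.det = 1) (u v : Fin 3 → R) :
    A *ᵥ (u ⨯₃ v) = (A *ᵥ u) ⨯₃ (A *ᵥ v) := by
  rw [mulVec_cross_mulVec, adjugate_eq_transpose_of_mul_transpose_eq_one horth hdet,
    transpose_transpose]

theorem Matrix.eq_one_of_mulVec_row_eq {n R : Type*} [Fintype n] [DecidableEq n] [CommRing R]
    {A M : Matrix n n R} (hM : IsUnit M.det) (hfix : ∀ i, A *ᵥ M i = M i) : A = 1 := by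
  have hMA : M * Aᵀ = M * 1 := by
    refine funext fun i => ?_
    rw [mul_apply_eq_vecMul, vecMul_transpose, hfix, mul_one]
  exact transpose_eq_one.mp (((isUnit_iff_isUnit_det M).mpr hM).mul_left_cancel hMA)

section RealAndImaginaryParts

variable {m n : Type*} [Fintype n] (g : Matrix m n ℝ) (z : n → ℂ)

theorem Matrix.re_map_ofReal_mulVec (i : m) :
    ((g.map (↑) *ᵥ z) i).re = (g *ᵥ (re ∘ z)) i := by
  simp [mulVec, dotProduct, re_sum]

theorem Matrix.im_map_ofReal_mulVec (i : m) :
    ((g.map (↑) *ᵥ z) i).im = (g *ᵥ (im ∘ z)) i := by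
  simp [mulVec, dotProduct, im_sum]

end RealAndImaginaryParts

theorem sq_dotProduct_re_im_lt_of_norm_sum_mul_self_lt {n : Type*} [Fintype n] {z : n → ℂ}
    (hz : ‖∑ i, z i * z i‖ < ∑ i, ‖z i‖ ^ 2) :
    (re ∘ z ⬝ᵥ im ∘ z) ^ 2 < (re ∘ z ⬝ᵥ re ∘ z) * (im ∘ z ⬝ᵥ im ∘ z) := by
  set x := re ∘ z
  set y := im ∘ z
  have hsum : ∑ i, z i * z i = ⟨x ⬝ᵥ x - y ⬝ᵥ y, 2 * x ⬝ᵥ y⟩ := by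
    apply Complex.ext
    · simp [x, y, dotProduct, re_sum, ← Finset.sum_sub_distrib]
    · simp [x, y, dotProduct, im_sum, Finset.mul_sum]
      ring_nf
  have hnorm : ∑ i, ‖z i‖ ^ 2 = x ⬝ᵥ x + y ⬝ᵥ y := by
    simp [x, y, dotProduct, Complex.sq_norm, normSq_apply, ← Finset.sum_add_distrib]
  have hlagrange : ‖∑ i, z i * z i‖ ^ 2 + 4 * (x ⬝ᵥ x * (y ⬝ᵥ y) - (x ⬝ᵥ y) ^ 2)
      = (∑ i, ‖z i‖ ^ 2) ^ 2 := by
    rw [hsum, hnorm, Complex.sq_norm, normSq_mk]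
    ring
  nlinarith [norm_nonneg (∑ i, z i * z i)]

/-- SO(3) acts freely on the open set `{z ∈ ℂ³ : ‖z‖² > |z·z|}`. -/
theorem so3_acts_freely (g : Matrix (Fin 3) (Fin 3) ℝ)
    (horth : g * g.transpose = 1) (hdet : g.det = 1)
    (z : Fin 3 → ℂ)
    (hz : ‖∑ i, z i * z i‖ < ∑ i, ‖z i‖ ^ 2)
    (hfix : (g.map (fun r => (r : ℂ))).mulVec z = z) :
    g = 1 := by
  set x := re ∘ z
  set y := im ∘ z
  have hx : g *ᵥ x = x := funext fun i => by
    rw [← re_map_ofReal_mulVec, hfix]; rfl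
  have hy : g *ᵥ y = y := funext fun i => by
    rw [← im_map_ofReal_mulVec, hfix]; rfl
  have hxy : g *ᵥ (x ⨯₃ y) = x ⨯₃ y := by
    rw [mulVec_cross_of_mul_transpose_eq_one horth hdet, hx, hy]
  have hbasis : 0 < det ![x ⨯₃ y, x, y] := by
    rw [← triple_product_eq_det, cross_dot_cross, dotProduct_comm y x]
    linarith [sq_dotProduct_re_im_lt_of_norm_sum_mul_self_lt hz]
  refine eq_one_of_mulVec_row_eq (isUnit_iff_ne_zero.mpr hbasis.ne') fun i => ?_
  fin_cases i
  exacts [hxy, hx, hy]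
end

section
/- Let h ∈ ℝ and q ∈ ℂ satisfy h² ≠ |q|², set D = h² − |q|², and define a = h / (2·(D²)^{1/3}) and b = −q / (2·(D²)^{1/3}). Then a² ≠ |b|², and the formulas invert: h = a / (8·(a² − |b|²)²) and q = −b / (8·(a² − |b|²)²). Moreover a > |b| if and only if h > |q|, a < −|b| if and only if h < −|q|, and |a| < |b| if and only if |h| < |q|. -/
/-! With `t = (D²)^{1/3}`, `D = h² − |q|²`, the map is the homothety `(h, q) ↦ (h, −q) / (2t)`,
so it preserves every sector, and `a² − |b|² = D / (4t²)`. Since `t³ = D²`, the quantity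
`8(a² − |b|²)² = 8D²/(16t⁴)` equals `1/(2t)`, the reciprocal of the scaling factor,
which gives the inversion formulas. -/

theorem Real.rpow_one_div_three_pow_three {x : ℝ} (hx : 0 ≤ x) :
    (x ^ ((1 : ℝ) / 3)) ^ 3 = x := by
  simpa [one_div] using Real.rpow_inv_natCast_pow hx (n := 3) (by norm_num)

theorem eight_mul_div_four_sq_sq_of_pow_three_eq_sq {D t : ℝ} (ht : t ≠ 0)
    (h3 : t ^ 3 = D ^ 2) : 8 * (D / (4 * t ^ 2)) ^ 2 = 1 / (2 * t) := by
  field_simp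
  linear_combination (-16) * h3

theorem Complex.norm_neg_div_ofReal_of_pos (q : ℂ) {s : ℝ} (hs : 0 < s) :
    ‖-q / (s : ℂ)‖ = ‖q‖ / s := by
  rw [norm_div, norm_neg, Complex.norm_real, Real.norm_of_nonneg hs.le]

/-- The formulas `a = h/(2(h²−|q|²)^{2/3})`, `b = −q/(2(h²−|q|²)^{2/3})` (where
`x^{2/3}` means `(x²)^{1/3}`) satisfy `a² ≠ |b|²`, invert as
`h = a/(8(a²−|b|²)²)`, `q = −b/(8(a²−|b|²)²)`, and carry each sector
`h > |q|`, `h < −|q|`, `|h| < |q|` to the corresponding sector in `(a,b)`. -/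
theorem invariants_invert (h : ℝ) (q : ℂ) (hne : h ^ 2 ≠ ‖q‖ ^ 2)
    (a : ℝ) (b : ℂ)
    (ha : a = h / (2 * ((h ^ 2 - ‖q‖ ^ 2) ^ 2) ^ ((1 : ℝ) / 3)))
    (hb : b = -q / ((2 * ((h ^ 2 - ‖q‖ ^ 2) ^ 2) ^ ((1 : ℝ) / 3) : ℝ) : ℂ)) :
    a ^ 2 ≠ ‖b‖ ^ 2 ∧
    h = a / (8 * (a ^ 2 - ‖b‖ ^ 2) ^ 2) ∧
    q = -b / ((8 * (a ^ 2 - ‖b‖ ^ 2) ^ 2 : ℝ) : ℂ) ∧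
    (a > ‖b‖ ↔ h > ‖q‖) ∧
    (a < -‖b‖ ↔ h < -‖q‖) ∧
    (|a| < ‖b‖ ↔ |h| < ‖q‖) := by
  set D := h ^ 2 - ‖q‖ ^ 2
  set t := (D ^ 2) ^ ((1 : ℝ) / 3)
  have hD : D ≠ 0 := sub_ne_zero.mpr hne
  have ht : 0 < t := Real.rpow_pos_of_pos (by positivity) _
  have ht3 : t ^ 3 = D ^ 2 := Real.rpow_one_div_three_pow_three (sq_nonneg D)
  have hbnorm : ‖b‖ = ‖q‖ / (2 * t) := hb ▸ Complex.norm_neg_div_ofReal_of_pos q (by positivity)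
  have hdisc : a ^ 2 - ‖b‖ ^ 2 = D / (4 * t ^ 2) := by rw [ha, hbnorm]; ring
  have hscale : 8 * (a ^ 2 - ‖b‖ ^ 2) ^ 2 = 1 / (2 * t) :=
    hdisc ▸ eight_mul_div_four_sq_sq_of_pow_three_eq_sq ht.ne' ht3
  refine ⟨fun hab => ?_, ?_, ?_, ?_, ?_, ?_⟩
  · rw [← sub_eq_zero, hdisc] at hab
    exact div_ne_zero hD (by positivity) hab
  · rw [hscale, ha]
    field_simp
  · have ht' : (t : ℂ) ≠ 0 := Complex.ofReal_ne_zero.mpr ht.ne'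
    rw [hscale, hb]
    push_cast
    field_simp
  · rw [ha, hbnorm]
    exact div_lt_div_iff_of_pos_right (by positivity)
  · rw [ha, hbnorm, ← neg_div]
    exact div_lt_div_iff_of_pos_right (by positivity)
  · rw [ha, hbnorm, abs_div, abs_of_pos (by positivity : (0 : ℝ) < 2 * t)]
    exact div_lt_div_iff_of_pos_right (by positivity)
end

section
/- A complex symmetric 2×2 matrix z satisfies Q(z) = 1 and H(z) = 1 if and only if all entries of z are real and det z = 1. In other words, M_{1,1} equals the set {x ∈ S₂(ℝ) : det x = 1}, the real unit hyperboloid of two sheets. -/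
/-!
Write `z = x + i y` with `x, y` real symmetric. Then `Q(z) = det x - det y + 2 i B(x, y)` and
`H(z) = det x + det y`, so `Q(z) = H(z) = 1` says `det x = 1`, `det y = 0` and `B(x, y) = 0`.
Since `det` has signature `(1, 2)` on `S₂(ℝ)`, the orthogonal complement of the timelike vector `x`
is spacelike, so the null vector `y` in it vanishes.
-/

open ComplexConjugate

/-- `(a, b, c)` and `(p, q, r)` are the entries `(x₀₀, x₁₁, x₀₁)` and `(y₀₀, y₁₁, y₀₁)` of real
symmetric matrices `x, y`; the hypotheses say `det x > 0`, `det y = 0` and `B(x, y) = 0`. -/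
theorem eq_zero_of_null_of_orthogonal_timelike {a b c p q r : ℝ} (hx : 0 < a * b - c ^ 2)
    (hy : p * q - r ^ 2 = 0) (hxy : a * q + p * b - 2 * c * r = 0) :
    p = 0 ∧ q = 0 ∧ r = 0 := by
  -- the reverse Cauchy–Schwarz inequality for the Lorentzian form `det`, in the case `B(x, y) = 0`
  have hsq : (a * q - p * b) ^ 2 + 4 * (a * b - c ^ 2) * r ^ 2 = 0 := by
    linear_combination (a * q + p * b + 2 * c * r) * hxy - 4 * a * b * hy
  have hr : r = 0 := by
    have : (a * b - c ^ 2) * r ^ 2 = 0 := by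
      nlinarith [sq_nonneg (a * q - p * b), mul_nonneg hx.le (sq_nonneg r)]
    exact pow_eq_zero_iff two_ne_zero |>.mp ((mul_eq_zero.mp this).resolve_left hx.ne')
  have hdiff : a * q - p * b = 0 := by
    rw [hr] at hsq
    exact pow_eq_zero_iff two_ne_zero |>.mp (by linarith)
  have hpos : 0 < a * b := by nlinarith [sq_nonneg c]
  have hq : q * (a * b) = 0 := by linear_combination (b / 2) * (hxy + hdiff) + c * b * hr
  have hp : p * (a * b) = 0 := by linear_combination (a / 2) * (hxy - hdiff) + c * a * hr
  exact ⟨(mul_eq_zero.mp hp).resolve_right hpos.ne', (mul_eq_zero.mp hq).resolve_right hpos.ne',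
    hr⟩

namespace Complex

theorem im_eq_zero_of_det_eq_one_of_herm_eq_one {u v w : ℂ} (hQ : u * v - w ^ 2 = 1)
    (hH : (u * conj v).re - ‖w‖ ^ 2 = 1) : u.im = 0 ∧ v.im = 0 ∧ w.im = 0 := by
  have hre := congrArg re hQ
  have him := congrArg im hQ
  simp only [sub_re, sub_im, mul_re, mul_im, sq, one_re, one_im] at hre him
  rw [Complex.sq_norm, normSq_apply, mul_re, conj_re, conj_im] at hH
  have hx : u.re * v.re - w.re ^ 2 = 1 := by linear_combination (hre + hH) / 2
  exact eq_zero_of_null_of_orthogonal_timelike (hx ▸ one_pos)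
    (by linear_combination (hH - hre) / 2) (by linear_combination him)

theorem herm_eq_det_re_of_im_eq_zero {u v w : ℂ} (hu : u.im = 0) (hv : v.im = 0)
    (hw : w.im = 0) : (u * conj v).re - ‖w‖ ^ 2 = (u * v - w ^ 2).re := by
  rw [Complex.sq_norm, normSq_apply]
  simp [mul_re, sq, hu, hv, hw]

end Complex

/-- A complex symmetric 2×2 matrix `z` satisfies `Q(z) = 1` and `H(z) = 1` iff all its
entries are real and `det z = 1`; i.e. `M_{1,1}` is the real hyperboloid of two sheets. -/
theorem M11_eq_real_hyperboloid (z : Matrix (Fin 2) (Fin 2) ℂ) (hsym : z 0 1 = z 1 0) :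
    (z 0 0 * z 1 1 - (z 0 1) ^ 2 = 1 ∧
      (z 0 0 * starRingEnd ℂ (z 1 1)).re - ‖z 0 1‖ ^ 2 = 1) ↔
    ((∀ i j, (z i j).im = 0) ∧ z 0 0 * z 1 1 - (z 0 1) ^ 2 = 1) := by
  constructor
  · rintro ⟨hQ, hH⟩
    obtain ⟨h00, h11, h01⟩ := Complex.im_eq_zero_of_det_eq_one_of_herm_eq_one hQ hH
    refine ⟨fun i j => ?_, hQ⟩
    fin_cases i <;> fin_cases j
    exacts [h00, h01, hsym ▸ h01, h11]
  · rintro ⟨hreal, hQ⟩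
    refine ⟨hQ, ?_⟩
    rw [Complex.herm_eq_det_re_of_im_eq_zero (hreal 0 0) (hreal 1 1) (hreal 0 1), hQ,
      Complex.one_re]
end

section
/- A complex symmetric 2×2 matrix z satisfies Q(z) = 0 and H(z) = 0 if and only if z = λ·x for some λ ∈ ℂ and some real symmetric 2×2 matrix x with det x = 0. In other words, M_{0,0} = {λx : λ ∈ ℂ, x ∈ S₂(ℝ), det x = 0}, a union of a real one-parameter family of complex lines. -/
/-!
Since `‖a * conj d‖ = ‖a * d‖ = ‖b‖ ^ 2`, the condition `re (a * conj d) = ‖b‖ ^ 2` says exactly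
that `a * conj d` is a nonnegative real. For `a ≠ 0` this makes `d / a` a nonnegative real, and
`(b / a) ^ 2 = d / a` then forces `b / a` to be real, so `(a, b, d) = a • (1, b / a, d / a)` with
a real singular matrix. The converse is a direct computation.
-/

namespace Complex

open ComplexConjugate ComplexOrder

lemma re_mul_conj_eq_norm_sq_iff_nonneg {a b d : ℂ} (h : a * d = b ^ 2) :
    (a * conj d).re = ‖b‖ ^ 2 ↔ 0 ≤ a * conj d := by
  have : ‖a * conj d‖ = ‖b‖ ^ 2 := by
    rw [norm_mul, norm_conj, ← norm_mul, h, norm_pow]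
  rw [← this, re_eq_norm]

lemma ofReal_re_eq_of_sq_nonneg {w : ℂ} (h : 0 ≤ w ^ 2) : (w.re : ℂ) = w :=
  conj_eq_iff_re.mp (conj_eq_iff_im.mpr (sq_nonneg_iff.mp h))

lemma div_nonneg_of_nonneg_mul_conj {a d : ℂ} (h : 0 ≤ a * conj d) : 0 ≤ d / a := by
  rcases eq_or_ne a 0 with rfl | ha
  · simp
  have hca : conj a ≠ 0 := (map_ne_zero _).mpr ha
  have : d / a = conj (a * conj d) / (a * conj a) := by
    rw [map_mul, conj_conj]
    field_simp
  rw [this]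
  exact div_nonneg (star_nonneg_iff.mpr h) (by rw [mul_conj]; exact_mod_cast normSq_nonneg a)

lemma exists_real_of_mul_eq_sq_of_nonneg_mul_conj {a b d : ℂ} (h : a * d = b ^ 2)
    (hnonneg : 0 ≤ a * conj d) :
    ∃ (l : ℂ) (p q r : ℝ), p * r = q ^ 2 ∧ a = l * p ∧ b = l * q ∧ d = l * r := by
  rcases eq_or_ne a 0 with rfl | ha
  · have hb : b = 0 := by simpa using h.symm
    exact ⟨d, 0, 0, 1, by simp, by simp, by simp [hb], by simp⟩
  have hsq : (b / a) ^ 2 = d / a := by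
    field_simp
    rw [← h]
  have hq := ofReal_re_eq_of_sq_nonneg (hsq ▸ div_nonneg_of_nonneg_mul_conj hnonneg)
  refine ⟨a, 1, (b / a).re, (b / a).re ^ 2, one_mul _, by simp, ?_, ?_⟩
  · rw [hq]; field_simp
  · push_cast; rw [hq, hsq]; field_simp

lemma mul_eq_sq_of_eq_mul_ofReal {a b d l : ℂ} {p q r : ℝ} (hdet : p * r = q ^ 2)
    (ha : a = l * p) (hb : b = l * q) (hd : d = l * r) :
    a * d = b ^ 2 ∧ 0 ≤ a * conj d := by
  subst ha hb hd
  have hdetC : (p : ℂ) * r = (q : ℂ) ^ 2 := by exact_mod_cast hdet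
  refine ⟨by linear_combination l ^ 2 * hdetC, ?_⟩
  have : l * p * conj (l * r) = ((normSq l * q ^ 2 : ℝ) : ℂ) := by
    rw [map_mul, conj_ofReal]
    push_cast
    rw [← mul_conj, ← hdetC]
    ring
  rw [this]
  exact_mod_cast mul_nonneg (normSq_nonneg l) (sq_nonneg q)

theorem mul_eq_sq_and_re_mul_conj_eq_iff {a b d : ℂ} :
    a * d = b ^ 2 ∧ (a * conj d).re = ‖b‖ ^ 2 ↔
      ∃ (l : ℂ) (p q r : ℝ), p * r = q ^ 2 ∧ a = l * p ∧ b = l * q ∧ d = l * r := by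
  constructor
  · rintro ⟨h, hre⟩
    exact exists_real_of_mul_eq_sq_of_nonneg_mul_conj h
      ((re_mul_conj_eq_norm_sq_iff_nonneg h).mp hre)
  · rintro ⟨l, p, q, r, hdet, ha, hb, hd⟩
    obtain ⟨h, hnonneg⟩ := mul_eq_sq_of_eq_mul_ofReal hdet ha hb hd
    exact ⟨h, (re_mul_conj_eq_norm_sq_iff_nonneg h).mpr hnonneg⟩

end Complex

/-- A complex symmetric 2×2 matrix `z` satisfies `Q(z) = 0` and `H(z) = 0` iff
`z = λ·x` for some `λ ∈ ℂ` and some real symmetric 2×2 matrix `x` with `det x = 0`. -/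
theorem M00_eq_union_of_complex_lines (z : Matrix (Fin 2) (Fin 2) ℂ)
    (hsym : z 0 1 = z 1 0) :
    (z 0 0 * z 1 1 - (z 0 1) ^ 2 = 0 ∧
      (z 0 0 * starRingEnd ℂ (z 1 1)).re - ‖z 0 1‖ ^ 2 = 0) ↔
    ∃ (l : ℂ) (x : Matrix (Fin 2) (Fin 2) ℝ),
      x 0 1 = x 1 0 ∧ x 0 0 * x 1 1 - (x 0 1) ^ 2 = 0 ∧
      ∀ i j, z i j = l * (x i j : ℂ) := by
  simp only [sub_eq_zero, Complex.mul_eq_sq_and_re_mul_conj_eq_iff]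
  constructor
  · rintro ⟨l, p, q, r, hdet, ha, hb, hd⟩
    refine ⟨l, !![p, q; q, r], rfl, by simpa using hdet, ?_⟩
    intro i j
    fin_cases i <;> fin_cases j <;> simp [ha, hb, hd, ← hsym]
  · rintro ⟨l, x, -, hdet, hzx⟩
    exact ⟨l, x 0 0, x 0 1, x 1 1, hdet, hzx 0 0, hzx 0 1, hzx 1 1⟩
end

section
/- Let h ∈ ℝ and q ∈ ℂ with h < −|q|, and let z be a complex symmetric 2×2 matrix with Q(z) = q and H(z) = h. If A ∈ SL(2,ℝ) satisfies A·z·Aᵀ = z (with the entries of A viewed as complex numbers), then A = I or A = −I. That is, the stabilizer in SL(2,ℝ) of any point of M_{h,q} with h < −|q| is {±I}, so that PSL(2,ℝ) acts freely on M_{h,q}. -/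
/-!
Write `z = X + iY` with `X`, `Y` real symmetric. Since `A` is real, it fixes `X` and `Y`
separately, and for `det A = 1` the identity `Aᵀ J A = J` (with `J = !![0, 1; -1, 0]`) turns
`A S Aᵀ = S` into `A (S J) = (S J) A`. Identifying the traceless part of a `2 × 2` matrix with a
vector of `ℝ³`, commuting becomes a vanishing cross product, so the traceless part of `A` is
parallel to those of `X J` and `Y J`. These are not parallel: otherwise `X`, `Y` would be
dependent and the binary form `(s, t) ↦ det (s X + t Y)` would have discriminant zero, whereas
`H² - |Q|²` is exactly minus that discriminant and `h < -|q|` makes it positive. Hence `A` is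
scalar, and `det A = 1` leaves `A = ±1`.
-/

open Matrix

namespace Matrix

theorem map_ofReal_mul_mul_transpose {m n : Type*} [Fintype n] (f : ℂ →ₗ[ℝ] ℝ)
    (A : Matrix m n ℝ) (z : Matrix n n ℂ) :
    (A.map (fun r : ℝ => (r : ℂ)) * z * (A.map (fun r : ℝ => (r : ℂ)))ᵀ).map f =
      A * z.map f * Aᵀ := by
  ext i j
  simp only [map_apply, mul_apply, transpose_apply, Finset.sum_mul, map_sum]
  refine Finset.sum_congr rfl fun k _ => Finset.sum_congr rfl fun l _ => ?_
  rw [mul_right_comm, ← Complex.ofReal_mul, ← Complex.real_smul, map_smul, smul_eq_mul]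
  ring

variable {R : Type*} [CommRing R]

theorem transpose_mul_symplectic_mul (A : Matrix (Fin 2) (Fin 2) R) :
    Aᵀ * !![0, 1; -1, 0] * A = A.det • !![0, 1; -1, 0] := by
  ext i j
  fin_cases i <;> fin_cases j <;> simp [det_fin_two, mul_apply, Fin.sum_univ_two] <;> ring

theorem commute_mul_symplectic_of_mul_mul_transpose_eq {A S : Matrix (Fin 2) (Fin 2) R}
    (hA : A.det = 1) (hS : A * S * Aᵀ = S) : Commute A (S * !![0, 1; -1, 0]) :=
  calc A * (S * !![0, 1; -1, 0])
      = A * S * (Aᵀ * !![0, 1; -1, 0] * A) := by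
        rw [transpose_mul_symplectic_mul, hA, one_smul, Matrix.mul_assoc]
    _ = S * !![0, 1; -1, 0] * A := by simp only [← Matrix.mul_assoc, hS]

/-- `M` has traceless part `!![t / 2, M 0 1; M 1 0, -t / 2]` with `t` the first coordinate;
in these coordinates the commutator of two matrices is read off the cross product. -/
def tracelessCoords (M : Matrix (Fin 2) (Fin 2) R) : Fin 3 → R :=
  ![M 0 0 - M 1 1, M 0 1, M 1 0]

theorem tracelessCoords_mul_symplectic (S : Matrix (Fin 2) (Fin 2) R) :
    tracelessCoords (S * !![0, 1; -1, 0]) = ![-(S 0 1 + S 1 0), S 0 0, -S 1 1] := by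
  ext i
  fin_cases i <;> simp [tracelessCoords, mul_apply, Fin.sum_univ_two]
  ring

theorem cross_tracelessCoords_eq_zero_of_commute {A M : Matrix (Fin 2) (Fin 2) R}
    (h : Commute A M) : tracelessCoords A ⨯₃ tracelessCoords M = 0 := by
  have h00 := congrFun₂ h.eq 0 0
  have h01 := congrFun₂ h.eq 0 1
  have h10 := congrFun₂ h.eq 1 0
  simp only [mul_apply, Fin.sum_univ_two] at h00 h01 h10
  ext i
  fin_cases i <;>
    simp only [tracelessCoords, cross_apply, Fin.zero_eta, Fin.mk_one, Fin.reduceFinMk, Fin.isValue,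
      cons_val_zero, cons_val_one, cons_val, Pi.zero_apply]
  · linear_combination h00
  · linear_combination h10
  · linear_combination h01

theorem eq_one_or_eq_neg_one_of_tracelessCoords_eq_zero [IsDomain R]
    {A : Matrix (Fin 2) (Fin 2) R} (h : tracelessCoords A = 0) (hA : A.det = 1) :
    A = 1 ∨ A = -1 := by
  have hd : A 0 0 = A 1 1 := sub_eq_zero.mp (congrFun h 0)
  have hb : A 0 1 = 0 := congrFun h 1
  have hc : A 1 0 = 0 := congrFun h 2
  rw [det_fin_two, hb, hc, mul_zero, sub_zero, ← hd] at hA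
  rcases mul_self_eq_one_iff.mp hA with ha | ha
  · left; ext i j; fin_cases i <;> fin_cases j <;> simp [ha, hb, hc, ← hd]
  · right; ext i j; fin_cases i <;> fin_cases j <;> simp [ha, hb, hc, ← hd]

theorem sq_polar_det_eq_of_cross_eq_zero {X Y : Matrix (Fin 2) (Fin 2) R}
    (hX : X 0 1 = X 1 0) (hY : Y 0 1 = Y 1 0)
    (h : tracelessCoords (X * !![0, 1; -1, 0]) ⨯₃ tracelessCoords (Y * !![0, 1; -1, 0]) = 0) :
    ((X + Y).det - X.det - Y.det) ^ 2 = 4 * X.det * Y.det := by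
  rw [tracelessCoords_mul_symplectic, tracelessCoords_mul_symplectic, cross_apply, ← hX,
    ← hY] at h
  have h0 := congrFun h 0
  have h2 := congrFun h 2
  simp only [cons_val_zero, cons_val_one, cons_val, Pi.zero_apply] at h0 h2
  simp only [det_fin_two, Matrix.add_apply, ← hX, ← hY]
  linear_combination (X 1 1 * Y 0 0 - X 0 0 * Y 1 1) * h0 +
    2 * (X 1 1 * Y 0 1 - X 0 1 * Y 1 1) * h2

theorem sq_H_sub_sq_norm_Q {z : Matrix (Fin 2) (Fin 2) ℂ} (hsym : z 0 1 = z 1 0) :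
    ((z 0 0 * starRingEnd ℂ (z 1 1)).re - ‖z 0 1‖ ^ 2) ^ 2 - ‖z 0 0 * z 1 1 - z 0 1 ^ 2‖ ^ 2 =
      4 * (z.map Complex.re).det * (z.map Complex.im).det -
        ((z.map Complex.re + z.map Complex.im).det - (z.map Complex.re).det
          - (z.map Complex.im).det) ^ 2 := by
  rw [Complex.sq_norm, Complex.sq_norm]
  simp only [Complex.normSq_apply, det_fin_two, Matrix.add_apply, map_apply, ← hsym,
    Complex.mul_re, Complex.mul_im, Complex.sub_re, Complex.sub_im, Complex.conj_re,
    Complex.conj_im, pow_two]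
  ring

end Matrix

theorem eq_zero_of_cross_eq_zero_of_cross_eq_zero {R : Type*} [Field R] [LinearOrder R]
    [IsStrictOrderedRing R] {u a b : Fin 3 → R} (hua : u ⨯₃ a = 0) (hub : u ⨯₃ b = 0)
    (hab : a ⨯₃ b ≠ 0) : u = 0 := by
  set c := a ⨯₃ b
  have hcu : c ⨯₃ u = 0 := by
    rw [← cross_anticomm, leibniz_cross, hua, hub]; simp
  have huc : u ⬝ᵥ c = 0 := by
    rw [triple_product_permutation, ← cross_anticomm, hub]; simp
  have : (c ⬝ᵥ c) • u = 0 := by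
    simpa [hcu, huc] using (cross_cross_eq_smul_sub_smul c u c).symm
  exact (smul_eq_zero.mp this).resolve_left (mt dotProduct_self_eq_zero.mp hab)

/-- For `h < −|q|`, the stabilizer in SL(2,ℝ) of any point of `M_{h,q}`
(under the action `A·z = A z Aᵀ`) is `{±I}`, so PSL(2,ℝ) acts freely. -/
theorem stabilizer_pm_one (h : ℝ) (q : ℂ) (hq : h < -‖q‖)
    (z : Matrix (Fin 2) (Fin 2) ℂ) (hsym : z 0 1 = z 1 0)
    (hQ : z 0 0 * z 1 1 - (z 0 1) ^ 2 = q)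
    (hH : (z 0 0 * starRingEnd ℂ (z 1 1)).re - ‖z 0 1‖ ^ 2 = h)
    (A : Matrix (Fin 2) (Fin 2) ℝ) (hA : A.det = 1)
    (hfix : (A.map (fun r => (r : ℂ))) * z * (A.map (fun r => (r : ℂ))).transpose = z) :
    A = 1 ∨ A = -1 := by
  set X := z.map Complex.re
  set Y := z.map Complex.im
  have hX : A * X * Aᵀ = X := by
    have := congrArg (Matrix.map · Complex.reLm) hfix
    rwa [map_ofReal_mul_mul_transpose, Complex.reLm_coe] at this
  have hY : A * Y * Aᵀ = Y := by
    have := congrArg (Matrix.map · Complex.imLm) hfix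
    rwa [map_ofReal_mul_mul_transpose, Complex.imLm_coe] at this
  have hdisc : ((X + Y).det - X.det - Y.det) ^ 2 < 4 * X.det * Y.det := by
    have := sq_H_sub_sq_norm_Q hsym
    rw [hQ, hH] at this
    nlinarith [norm_nonneg q]
  refine eq_one_or_eq_neg_one_of_tracelessCoords_eq_zero ?_ hA
  exact eq_zero_of_cross_eq_zero_of_cross_eq_zero
    (cross_tracelessCoords_eq_zero_of_commute
      (commute_mul_symplectic_of_mul_mul_transpose_eq hA hX))
    (cross_tracelessCoords_eq_zero_of_commute
      (commute_mul_symplectic_of_mul_mul_transpose_eq hA hY))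
    fun h0 => hdisc.ne (sq_polar_det_eq_of_cross_eq_zero (congrArg Complex.re hsym)
      (congrArg Complex.im hsym) h0)
end

section
/- Let J ⊆ ℝ be an interval and let a, b : J → ℝ be differentiable with b(t) > 0 for all t ∈ J, satisfying a′(t) = (4/3)·a(t)² + 4·b(t)² and b′(t) = (16/3)·a(t)·b(t) on J. Then the function t ↦ (a(t)² − b(t)²)² / b(t) is constant on J; consequently each such solution lies on a quartic plane curve (a² − b²)² = λ³·b for some constant λ ≥ 0. -/
/-! The derivative of `(a² − b²)² / b` along a solution vanishes identically: with
`u = a² − b²` one has `u′ = (8/3) a u` and `b′ = (16/3) a b`, so `(u²)′ / u² = b′ / b`.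
By the mean value inequality the quantity is constant on the interval, and since it is
nonnegative it is a cube `λ³`. -/

theorem Convex.is_const_of_hasDerivAt_eq_zero {E : Type*} [NormedAddCommGroup E]
    [NormedSpace ℝ E] {s : Set ℝ} (hs : Convex ℝ s) {f : ℝ → E}
    (hf : ∀ t ∈ s, HasDerivAt f 0 t) {x y : ℝ} (hx : x ∈ s) (hy : y ∈ s) : f x = f y := by
  have hbound := hs.norm_image_sub_le_of_norm_hasDerivWithin_le (C := 0)
    (fun t ht => (hf t ht).hasDerivWithinAt) (fun _ _ => norm_zero.le) hx hy
  simpa [sub_eq_zero, eq_comm] using hbound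

noncomputable def abFirstIntegral (x y : ℝ) : ℝ := (x ^ 2 - y ^ 2) ^ 2 / y

theorem abFirstIntegral_nonneg {x y : ℝ} (hy : 0 ≤ y) : 0 ≤ abFirstIntegral x y :=
  div_nonneg (sq_nonneg _) hy

theorem hasDerivAt_abFirstIntegral_comp {a b : ℝ → ℝ} {t : ℝ} (hbt : b t ≠ 0)
    (ha : HasDerivAt a ((4 / 3) * (a t) ^ 2 + 4 * (b t) ^ 2) t)
    (hb : HasDerivAt b ((16 / 3) * a t * b t) t) :
    HasDerivAt (fun s => abFirstIntegral (a s) (b s)) 0 t := by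
  refine ((((ha.pow 2).sub (hb.pow 2)).pow 2).div hb hbt).congr_deriv ?_
  simp only [Pi.sub_apply, Pi.pow_apply]
  rw [div_eq_iff (pow_ne_zero 2 hbt)]
  ring

theorem exists_nonneg_pow_three_eq {c : ℝ} (hc : 0 ≤ c) : ∃ lam : ℝ, 0 ≤ lam ∧ lam ^ 3 = c :=
  ⟨c ^ ((3 : ℕ)⁻¹ : ℝ), Real.rpow_nonneg hc _, Real.rpow_inv_natCast_pow hc three_ne_zero⟩

/-- For a solution of `a′ = (4/3)a² + 4b²`, `b′ = (16/3)ab` with `b > 0` on an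
interval `J`, the quantity `(a² − b²)²/b` is constant on `J`; hence the solution
lies on a quartic curve `(a² − b²)² = λ³·b` with `λ ≥ 0`. -/
theorem first_integral_of_invariant_ode (J : Set ℝ) (hJ : J.OrdConnected)
    (a b : ℝ → ℝ) (hbpos : ∀ t ∈ J, 0 < b t)
    (ha : ∀ t ∈ J, HasDerivAt a ((4 / 3) * (a t) ^ 2 + 4 * (b t) ^ 2) t)
    (hb : ∀ t ∈ J, HasDerivAt b ((16 / 3) * a t * b t) t) :
    (∀ s ∈ J, ∀ t ∈ J,
      ((a s) ^ 2 - (b s) ^ 2) ^ 2 / b s = ((a t) ^ 2 - (b t) ^ 2) ^ 2 / b t) ∧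
    ∃ lam : ℝ, 0 ≤ lam ∧ ∀ t ∈ J, ((a t) ^ 2 - (b t) ^ 2) ^ 2 = lam ^ 3 * b t := by
  have hconst : ∀ s ∈ J, ∀ t ∈ J, abFirstIntegral (a s) (b s) = abFirstIntegral (a t) (b t) :=
    fun s hs t ht => hJ.convex.is_const_of_hasDerivAt_eq_zero
      (fun u hu => hasDerivAt_abFirstIntegral_comp (hbpos u hu).ne' (ha u hu) (hb u hu)) hs ht
  refine ⟨hconst, ?_⟩
  rcases J.eq_empty_or_nonempty with rfl | ⟨t₀, ht₀⟩
  · exact ⟨0, le_rfl, fun t ht => ht.elim⟩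
  obtain ⟨lam, hlam, hcube⟩ :=
    exists_nonneg_pow_three_eq (abFirstIntegral_nonneg (x := a t₀) (hbpos t₀ ht₀).le)
  refine ⟨lam, hlam, fun t ht => ?_⟩
  rw [hcube, ← hconst t ht t₀ ht₀, abFirstIntegral, div_mul_cancel₀ _ (hbpos t ht).ne']
end

section
/- Let a₀, b₀ ∈ ℝ with a₀ = b₀ or a₀ = −b₀ and b₀ ≠ 0. Then the functions a(t) = a₀ / (1 − (16/3)·a₀·t) and b(t) = b₀ / (1 − (16/3)·a₀·t) satisfy a(0) = a₀, b(0) = b₀, a′(t) = (4/3)·a(t)² + 4·b(t)², and b′(t) = (16/3)·a(t)·b(t) at every t with (16/3)·a₀·t < 1. -/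
/-! On `a = ±b` we have `a² = b²`, so the system collapses to `a′ = (16/3)a²`, `b′ = (16/3)ab`,
and both equations are solved by the Riccati profiles `c / (1 - (16/3)a₀t)`. -/

theorem hasDerivAt_div_one_sub_mul (c k t : ℝ) (h : 1 - k * t ≠ 0) :
    HasDerivAt (fun t => c / (1 - k * t)) (c * k / (1 - k * t) ^ 2) t := by
  have hden : HasDerivAt (fun t : ℝ => 1 - k * t) (-k) t := by
    simpa using ((hasDerivAt_id t).const_mul k).const_sub 1
  exact ((hasDerivAt_const t c).div hden h).congr_deriv (by ring)

theorem solution_on_degenerate_quartic_general (a₀ b₀ : ℝ)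
    (hab : a₀ = b₀ ∨ a₀ = -b₀) (a b : ℝ → ℝ)
    (hadef : a = fun t => a₀ / (1 - (16 / 3) * a₀ * t))
    (hbdef : b = fun t => b₀ / (1 - (16 / 3) * a₀ * t)) :
    a 0 = a₀ ∧ b 0 = b₀ ∧
    ∀ t : ℝ, (16 / 3) * a₀ * t < 1 →
      HasDerivAt a ((4 / 3) * (a t) ^ 2 + 4 * (b t) ^ 2) t ∧
      HasDerivAt b ((16 / 3) * a t * b t) t := by
  subst hadef hbdef
  refine ⟨by simp, by simp, fun t ht => ?_⟩
  have hden : 1 - 16 / 3 * a₀ * t ≠ 0 := (sub_pos.2 ht).ne'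
  have hsq : b₀ ^ 2 = a₀ ^ 2 := by rcases hab with rfl | rfl <;> ring
  refine ⟨(hasDerivAt_div_one_sub_mul a₀ _ t hden).congr_deriv ?_,
    (hasDerivAt_div_one_sub_mul b₀ _ t hden).congr_deriv ?_⟩
  · rw [div_pow, div_pow, hsq]
    ring
  · field_simp

/-- For `a₀ = ±b₀ ≠ 0` the pair `a(t) = a₀/(1 − (16/3)a₀t)`,
`b(t) = b₀/(1 − (16/3)a₀t)` solves the invariant evolution system
`a′ = (4/3)a² + 4b²`, `b′ = (16/3)ab` wherever `(16/3)a₀t < 1`. -/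
theorem solution_on_degenerate_quartic (a₀ b₀ : ℝ) (hb₀ : b₀ ≠ 0)
    (hab : a₀ = b₀ ∨ a₀ = -b₀) (a b : ℝ → ℝ)
    (hadef : a = fun t => a₀ / (1 - (16 / 3) * a₀ * t))
    (hbdef : b = fun t => b₀ / (1 - (16 / 3) * a₀ * t)) :
    a 0 = a₀ ∧ b 0 = b₀ ∧
    ∀ t : ℝ, (16 / 3) * a₀ * t < 1 →
      HasDerivAt a ((4 / 3) * (a t) ^ 2 + 4 * (b t) ^ 2) t ∧
      HasDerivAt b ((16 / 3) * a t * b t) t :=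
  solution_on_degenerate_quartic_general a₀ b₀ hab a b hadef hbdef
end

section
/- The invariant evolution system has no globally defined solution starting in the sector b > |a|: if a, b : ℝ → ℝ are differentiable on all of ℝ and satisfy a′(t) = (4/3)·a(t)² + 4·b(t)² and b′(t) = (16/3)·a(t)·b(t) for every t ∈ ℝ, then b(0) ≤ |a(0)|. -/
/-!
The lines `b = a` and `b = -a` are invariant: `b - a` and `a + b` solve linear equations
`u' = g u`, so both stay positive once they are. Inside the sector the
quantity `w = a + b` then satisfies `w' = (4/3 a + 4 b) w ≥ (8/3) w²`, since the difference is
`(4/3) (b - a) w`; a positive solution of such a Riccati inequality blows up in finite time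
because `1/w` decreases at rate at least `8/3`.
-/

open Set intervalIntegral

theorem eq_exp_integral_mul_of_hasDerivAt {f g : ℝ → ℝ} (hg : Continuous g)
    (hf : ∀ t, HasDerivAt f (g t * f t) t) (t : ℝ) :
    f t = Real.exp (∫ s in (0 : ℝ)..t, g s) * f 0 := by
  set G : ℝ → ℝ := fun t => ∫ s in (0 : ℝ)..t, g s
  have hG : ∀ t, HasDerivAt G (g t) t := fun t =>
    integral_hasDerivAt_right (hg.intervalIntegrable _ _) (hg.stronglyMeasurableAtFilter _ _)
      hg.continuousAt
  -- integrating factor: `(exp (-G) * f)' = exp (-G) * (-g f + g f) = 0`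
  have hconst : ∀ t, HasDerivAt (fun t => Real.exp (-G t) * f t) 0 t := fun t =>
    (((hG t).neg.exp).mul (hf t)).congr_deriv (by ring)
  have key := is_const_of_deriv_eq_zero (fun s => (hconst s).differentiableAt)
    (fun s => (hconst s).deriv) t 0
  simp only [G, integral_same, neg_zero, Real.exp_zero, one_mul] at key
  rw [← key, ← mul_assoc, ← Real.exp_add, add_neg_cancel, Real.exp_zero, one_mul]

theorem pos_of_hasDerivAt_mul {f g : ℝ → ℝ} (hg : Continuous g)
    (hf : ∀ t, HasDerivAt f (g t * f t) t) (h0 : 0 < f 0) (t : ℝ) : 0 < f t := by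
  rw [eq_exp_integral_mul_of_hasDerivAt hg hf t]
  positivity

theorem mul_mul_lt_one_of_mul_sq_le_deriv {w w' : ℝ → ℝ} {c T : ℝ} (hT : 0 ≤ T)
    (hw : ∀ t ∈ Icc 0 T, HasDerivAt w (w' t) t) (hsq : ∀ t ∈ Icc 0 T, c * w t ^ 2 ≤ w' t)
    (hpos : ∀ t ∈ Icc 0 T, 0 < w t) : c * T * w 0 < 1 := by
  have hderiv : ∀ t ∈ Icc 0 T,
      HasDerivAt (fun t => (w t)⁻¹ + c * t) (-w' t / w t ^ 2 + c) t := fun t ht =>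
    ((hw t ht).inv (hpos t ht).ne').add (((hasDerivAt_id t).const_mul c).congr_deriv (mul_one c))
  have hanti : AntitoneOn (fun t => (w t)⁻¹ + c * t) (Icc 0 T) := by
    refine antitoneOn_of_hasDerivWithinAt_nonpos (convex_Icc 0 T)
      (fun t ht => (hderiv t ht).continuousAt.continuousWithinAt)
      (fun t ht => (hderiv t (interior_subset ht)).hasDerivWithinAt) fun t ht => ?_
    have ht := interior_subset ht
    have hw2 := pow_pos (hpos t ht) 2
    rw [neg_div, neg_add_nonpos_iff, le_div_iff₀ hw2]
    exact hsq t ht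
  have h0 : (0 : ℝ) ∈ Icc 0 T := left_mem_Icc.2 hT
  have hTmem : T ∈ Icc 0 T := right_mem_Icc.2 hT
  have hmono := hanti h0 hTmem hT
  have hw0 := hpos 0 h0
  have hcT : c * T < (w 0)⁻¹ := by
    simp only [mul_zero, add_zero] at hmono
    linarith [inv_pos.2 (hpos T hTmem)]
  calc c * T * w 0 < (w 0)⁻¹ * w 0 := mul_lt_mul_of_pos_right hcT hw0
    _ = 1 := inv_mul_cancel₀ hw0.ne'

/-- The invariant evolution system has no globally defined solution starting in
the sector `b > |a|`: a global solution on all of `ℝ` must have `b(0) ≤ |a(0)|`. -/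
theorem no_global_solution_in_sector (a b : ℝ → ℝ)
    (ha : ∀ t, HasDerivAt a ((4 / 3) * (a t) ^ 2 + 4 * (b t) ^ 2) t)
    (hb : ∀ t, HasDerivAt b ((16 / 3) * a t * b t) t) :
    b 0 ≤ |a 0| := by
  by_contra! hsector
  obtain ⟨hneg, hpos⟩ := abs_lt.mp hsector
  have hca : Continuous a := continuous_iff_continuousAt.2 fun t => (ha t).continuousAt
  have hcb : Continuous b := continuous_iff_continuousAt.2 fun t => (hb t).continuousAt
  have hdiff : ∀ t, 0 < b t - a t := pos_of_hasDerivAt_mul (g := fun t => 4 / 3 * a t - 4 * b t)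
    (by fun_prop) (fun t => ((hb t).sub (ha t)).congr_deriv (by ring)) (by linarith)
  have hw : ∀ t, HasDerivAt (fun t => a t + b t) ((4 / 3 * a t + 4 * b t) * (a t + b t)) t :=
    fun t => ((ha t).add (hb t)).congr_deriv (by ring)
  have hsum : ∀ t, 0 < a t + b t :=
    pos_of_hasDerivAt_mul (by fun_prop) hw (by linarith)
  have hsum0 := hsum 0
  have hblowup := mul_mul_lt_one_of_mul_sq_le_deriv (c := 8 / 3) (T := 3 / 8 * (a 0 + b 0)⁻¹)
    (by positivity) (fun t _ => hw t)
    (fun t _ => by nlinarith [mul_pos (hdiff t) (hsum t)]) (fun t _ => hsum t)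
  rw [← mul_assoc, mul_assoc _ _ (a 0 + b 0), inv_mul_cancel₀ hsum0.ne'] at hblowup
  norm_num at hblowup
end
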